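/- More generally, for a formal parameter κ, the formal power series χ(y,κ) ∈ y·Q[κ][[y]] with χ(0,κ)=0 satisfying ∂χ/∂y = (1+χ)/(1+y−κχ) also satisfies κ(1+χ)·log(1+χ) = (κ+1)χ − y. -/

import Mathlib

/-!
With `κ = C X`, the series `Φ = κ (1 + χ) log(1 + χ) - (κ + 1) χ + y` vanishes at `y = 0`. Since
`(1 + χ) · (log(1 + χ))' = χ'` and `χ' (1 + y - κχ) = 1 + χ`, it satisfies the linear equation
`Φ' (1 + y - κχ) = Φ`, whose only solution vanishing at `0` is `0`: comparing coefficients of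
`yⁿ` determines `(n + 1) Φₙ₊₁` from `Φ₀, …, Φₙ`.
-/

open PowerSeries

/-- The formal logarithm `log(1+u) = ∑_{k≥1} (-1)^{k+1} u^k / k` for a power series
`u` with vanishing constant term, over a `ℚ`-algebra. -/
noncomputable def logOnePlus {R : Type*} [CommRing R] [Algebra ℚ R]
    (u : PowerSeries R) : PowerSeries R :=
  PowerSeries.mk fun n =>
    ∑ k ∈ Finset.Icc 1 n, ((-1 : ℚ) ^ (k + 1) / (k : ℚ)) • (PowerSeries.coeff (R := R) n (u ^ k))

namespace PowerSeries

variable {A : Type*} [CommRing A] [Algebra ℚ A]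

theorem one_add_X_mul_derivative_log : (1 + X) * d⁄dX A (log A) = 1 := by
  ext n
  rcases n with _ | n
  · simp [deriv_log]
  · simp [deriv_log, add_mul, coeff_succ_X_mul, pow_succ]

theorem logOnePlus_eq_subst_log {f : A⟦X⟧} (hf : constantCoeff f = 0) :
    logOnePlus f = (log A).subst f := by
  ext n
  rw [logOnePlus, coeff_mk, coeff_subst' (HasSubst.of_constantCoeff_zero' hf),
    finsum_eq_sum_of_support_subset (s := Finset.Icc 1 n)]
  · refine Finset.sum_congr rfl fun k hk => ?_
    rw [coeff_log, if_neg (by grind), smul_eq_mul, Algebra.smul_def]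
  · intro k hk
    rw [Function.mem_support, coeff_log] at hk
    rw [Finset.coe_Icc, Set.mem_Icc]
    refine ⟨Nat.one_le_iff_ne_zero.mpr fun hk0 => hk (by simp [hk0]), not_lt.mp fun hnk => hk ?_⟩
    rw [coeff_of_lt_order n ((Nat.cast_lt.mpr hnk).trans_le
      (le_order_pow_of_constantCoeff_eq_zero k hf)), smul_zero]

theorem constantCoeff_logOnePlus (f : A⟦X⟧) : constantCoeff (logOnePlus f) = 0 := by
  rw [← coeff_zero_eq_constantCoeff_apply, logOnePlus, coeff_mk]
  simp

theorem one_add_mul_derivative_logOnePlus {f : A⟦X⟧} (hf : constantCoeff f = 0) :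
    (1 + f) * d⁄dX A (logOnePlus f) = d⁄dX A f := by
  have hs := HasSubst.of_constantCoeff_zero' hf
  rw [logOnePlus_eq_subst_log hf, derivative_subst hs, ← mul_assoc]
  convert one_mul (d⁄dX A f)
  calc (1 + f) * (d⁄dX A (log A)).subst f
      = substAlgHom hs ((1 + X) * d⁄dX A (log A)) := by
        rw [map_mul, map_add, map_one, substAlgHom_X, coe_substAlgHom]
    _ = 1 := by rw [one_add_X_mul_derivative_log, map_one]

theorem eq_zero_of_derivative_mul_eq_self {R : Type*} [CommRing R] [IsAddTorsionFree R]
    {f D : R⟦X⟧} (hD : IsUnit (constantCoeff D)) (hf : constantCoeff f = 0)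
    (h : d⁄dX R f * D = f) : f = 0 := by
  ext n
  rw [map_zero]
  induction n using Nat.strong_induction_on with
  | _ n ih =>
    rcases n with _ | n
    · rwa [coeff_zero_eq_constantCoeff_apply]
    have hcoeff : coeff n (d⁄dX R f * D) = coeff (n + 1) f * (n + 1) * constantCoeff D := by
      rw [coeff_mul, Finset.sum_eq_single (n, 0)]
      · rw [coeff_derivative, coeff_zero_eq_constantCoeff_apply]
      · rintro ⟨i, j⟩ hij hne
        rw [Finset.HasAntidiagonal.mem_antidiagonal] at hij
        rw [coeff_derivative, ih (i + 1) (by grind), zero_mul, zero_mul]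
      · simp
    rw [h, ih n n.lt_succ_self, eq_comm, hD.mul_left_eq_zero, ← Nat.cast_succ,
      ← nsmul_eq_mul'] at hcoeff
    exact (smul_eq_zero.mp hcoeff).resolve_left n.succ_ne_zero

end PowerSeries

/-- The refined Manin equation: a formal power series `χ(y,κ) ∈ y·ℚ[κ]⟦y⟧`
satisfying `∂χ/∂y = (1+χ)/(1+y−κχ)` also satisfies
`κ(1+χ)·log(1+χ) = (κ+1)χ − y`. Here `κ` is `Polynomial.X : ℚ[κ]`, and the
inverse of `1+y−κχ` (a power series with constant term `1`) is taken via
`PowerSeries.invOfUnit` at the unit `1`. -/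
theorem ode_implies_refined_manin_equation (χ : PowerSeries (Polynomial ℚ))
    (h0 : PowerSeries.coeff (R := Polynomial ℚ) 0 χ = 0)
    (hode : PowerSeries.derivativeFun χ =
      (1 + χ) * PowerSeries.invOfUnit
        (1 + PowerSeries.X - PowerSeries.C (R := Polynomial ℚ) Polynomial.X * χ) 1) :
    PowerSeries.C (R := Polynomial ℚ) Polynomial.X * ((1 + χ) * logOnePlus χ) =
      (PowerSeries.C (R := Polynomial ℚ) Polynomial.X + 1) * χ - PowerSeries.X := by
  set κ : PowerSeries (Polynomial ℚ) := PowerSeries.C Polynomial.X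
  set D : PowerSeries (Polynomial ℚ) := 1 + X - κ * χ
  have hχ : constantCoeff χ = 0 := by rwa [← coeff_zero_eq_constantCoeff_apply]
  have hD : constantCoeff D = 1 := by simp [D, κ, hχ]
  have hχ' : d⁄dX _ χ * D = 1 + χ := by
    rw [show d⁄dX _ χ = _ from hode, mul_assoc, invOfUnit_mul D 1 (by simp [hD]), mul_one]
  have hκ : d⁄dX _ κ = 0 := derivative_C
  have hlog := one_add_mul_derivative_logOnePlus hχ
  rw [← sub_eq_zero]
  refine eq_zero_of_derivative_mul_eq_self (D := D) (by simp [hD])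
    (by simp [κ, hχ, constantCoeff_logOnePlus]) ?_
  simp only [map_sub, map_add, Derivation.leibniz, smul_eq_mul, hκ, derivative_X,
    Derivation.map_one_eq_zero]
  linear_combination (κ * logOnePlus χ - 1) * hχ' + κ * D * hlog
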